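/- Let r ≥ 2 be an integer and let p, q be coprime integers. Then S_{r−1}(C(p,q)) = 0, where S_{r−1} is the Chebyshev polynomial of the second kind of degree r−1 evaluated on the matrix C(p,q). (Topologically: a simple closed curve on the torus colored by the r-dimensional irreducible representation of the quantum group of SL(2,ℂ) gives the zero operator.) -/

import Mathlib

open Complex Matrix

/-- `t = exp(iπ/(2r))`. -/
noncomputable def tconst (r : ℕ) : ℂ := Complex.exp (Real.pi * Complex.I / (2 * r))

/-- `ε(k,j) = 1` if `j ≡ k (mod 2r)`, `−1` if `j ≡ −k (mod 2r)`, `0` otherwise. -/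
def eps (r : ℕ) (k j : ℤ) : ℤ :=
  if (2 * (r : ℤ)) ∣ (j - k) then 1 else if (2 * (r : ℤ)) ∣ (j + k) then -1 else 0

/-- The matrix of the Weyl quantization of `2 cos 2π(px+qy)` in the basis `ζ_1, …, ζ_{r−1}`:
`C(p,q)_{k,m} = t^{−pq} (t^{2qm} ε(k, m−p) + t^{−2qm} ε(k, m+p))`, with indices shifted so that
the index `k : Fin (r-1)` corresponds to `k+1 ∈ {1, …, r−1}`. -/
noncomputable def Cmat (r : ℕ) (p q : ℤ) : Matrix (Fin (r - 1)) (Fin (r - 1)) ℂ :=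
  Matrix.of fun k m =>
    tconst r ^ (-(p * q)) *
      (tconst r ^ (2 * q * ((m : ℤ) + 1)) * (eps r ((k : ℤ) + 1) (((m : ℤ) + 1) - p) : ℂ) +
       tconst r ^ (-(2 * q * ((m : ℤ) + 1))) * (eps r ((k : ℤ) + 1) (((m : ℤ) + 1) + p) : ℂ))

/-- The quantized integer `[n] = sin(nπ/r)/sin(π/r)`. -/
noncomputable def qint (r : ℕ) (n : ℤ) : ℝ :=
  Real.sin (n * Real.pi / r) / Real.sin (Real.pi / r)

/-- Chebyshev polynomials of the second kind: `S_0 = 1`, `S_1 = X`,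
`S_{n+1} = X·S_n − S_{n−1}`. -/
noncomputable def chebS : ℕ → Polynomial ℂ
  | 0 => 1
  | 1 => Polynomial.X
  | (n + 2) => Polynomial.X * chebS (n + 1) - chebS n

/-!
Extend a vector indexed by `{1, …, r-1}` to an odd `2r`-periodic function on `ℤ`, so that
`ζ_k = ε(k, ·)` is `δ_k - δ_{-k}` (mod `2r`). On such functions `C(p,q)` acts on row vectors as
`u + u⁻¹`, where `u` is the Weyl operator `F ↦ (m ↦ t^(2qm-pq) F(m-p))` and `u^a` is the Weyl
operator of `a(p,q)`. Hence `S_{r-1}(C(p,q))` corresponds to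
`S_{r-1}(u + u⁻¹) = ∑_{j<r} u^(r-1-2j)`.

Applied to `ζ_k`, this sum is, up to a phase, the difference of the two partial quadratic Gauss
sums `∑_{j mod r} t^(-4jq(c+jp))` over `c + 2jp ≡ k` and over `c + 2jp ≡ -k` (mod `2r`). Let
`d = gcd(p, r)`. If `d ∤ k`, shifting `j` by `r/d` multiplies each sum by `t^(-4q(r/d)k) ≠ 1`
(as `d` is coprime to `q`), so both vanish; if `d ∣ k` but `d ∤ c`, both are empty; if `d ∣ c`,
the reflection `j ↦ s - j` with `sp ≡ -c` (mod `r`) exchanges them.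
-/

open Polynomial Finset Function

theorem sum_range_eq_sum_zmod {α : Type*} [AddCommMonoid α] (g : ℤ → α) (r : ℕ) [NeZero r] :
    ∑ j ∈ range r, g j = ∑ x : ZMod r, g x.val := by
  obtain ⟨n, rfl⟩ : ∃ n, r = n + 1 := ⟨r - 1, by have := NeZero.pos r; omega⟩
  exact (Fin.sum_univ_eq_sum_range (fun j => g j) (n + 1)).symm

namespace Function.Periodic

variable {α : Type*} {g : ℤ → α} {r : ℕ}

theorem eq_of_modEq {c : ℤ} (hg : Periodic g c) {a b : ℤ} (h : a ≡ b [ZMOD c]) : g a = g b := by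
  obtain ⟨k, hk⟩ := Int.modEq_iff_dvd.mp h
  rw [show b = a + k * c by linarith]
  exact (hg.int_mul k a).symm

theorem sum_range_add [AddCommMonoid α] (hg : Periodic g r) (s : ℤ) :
    ∑ j ∈ range r, g (j + s) = ∑ j ∈ range r, g j := by
  rcases eq_or_ne r 0 with rfl | hr
  · simp
  have : NeZero r := ⟨hr⟩
  rw [sum_range_eq_sum_zmod (fun j => g (j + s)), sum_range_eq_sum_zmod g]
  exact Fintype.sum_equiv (Equiv.addRight (s : ZMod r)) _ _ fun x =>
    hg.eq_of_modEq <| (ZMod.intCast_eq_intCast_iff _ _ _).mp <| by simp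

theorem sum_range_sub [AddCommMonoid α] (hg : Periodic g r) (s : ℤ) :
    ∑ j ∈ range r, g (s - j) = ∑ j ∈ range r, g j := by
  rcases eq_or_ne r 0 with rfl | hr
  · simp
  have : NeZero r := ⟨hr⟩
  rw [sum_range_eq_sum_zmod (fun j => g (s - j)), sum_range_eq_sum_zmod g]
  exact Fintype.sum_equiv (Equiv.subLeft (s : ZMod r)) _ _ fun x =>
    hg.eq_of_modEq <| (ZMod.intCast_eq_intCast_iff _ _ _).mp <| by simp

theorem sum_range_eq_zero_of_add_eq_mul {R : Type*} [Ring R] [NoZeroDivisors R] {g : ℤ → R}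
    (hg : Periodic g r) {s : ℤ} {ω : R} (hω : ω ≠ 1) (hs : ∀ j, g (j + s) = ω * g j) :
    ∑ j ∈ range r, g j = 0 := by
  have h := hg.sum_range_add s
  simp_rw [hs, ← mul_sum] at h
  have : (ω - 1) * ∑ j ∈ range r, g j = 0 := by rw [sub_mul, h, one_mul, sub_self]
  exact (mul_eq_zero.mp this).resolve_left (sub_ne_zero.mpr hω)

end Function.Periodic

theorem tconst_ne_zero (r : ℕ) : tconst r ≠ 0 := Complex.exp_ne_zero _

theorem isPrimitiveRoot_tconst {r : ℕ} (hr : r ≠ 0) : IsPrimitiveRoot (tconst r) (4 * r) := by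
  convert Complex.isPrimitiveRoot_exp (4 * r) (by positivity) using 2
  rw [tconst]
  congr 1
  push_cast
  field_simp
  ring

theorem tconst_zpow_eq_one_iff {r : ℕ} (hr : r ≠ 0) {a : ℤ} :
    tconst r ^ a = 1 ↔ 4 * (r : ℤ) ∣ a := by
  simpa using (isPrimitiveRoot_tconst hr).zpow_eq_one_iff_dvd a

theorem tconst_zpow_eq_zpow {r : ℕ} (hr : r ≠ 0) {a b : ℤ} (h : 4 * (r : ℤ) ∣ a - b) :
    tconst r ^ a = tconst r ^ b := by
  rw [← sub_add_cancel a b, zpow_add₀ (tconst_ne_zero r), (tconst_zpow_eq_one_iff hr).mpr h,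
    one_mul]

theorem eps_periodic (r : ℕ) (k : ℤ) : Periodic (eps r k) (2 * r) := fun j => by
  simp only [eps, add_sub_right_comm, add_right_comm j, dvd_add_self_right]

theorem eps_eq_sub {r : ℕ} {k : ℤ} (hk : 0 < k) (hkr : k < r) (j : ℤ) :
    eps r k j = (if 2 * (r : ℤ) ∣ j - k then 1 else 0) - if 2 * (r : ℤ) ∣ j + k then 1 else 0 := by
  have : ¬ (2 * (r : ℤ) ∣ j - k ∧ 2 * (r : ℤ) ∣ j + k) := fun ⟨h₁, h₂⟩ => by
    have := Int.le_of_dvd (by omega) (show 2 * (r : ℤ) ∣ 2 * k by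
      simpa [two_mul, add_sub_sub_cancel] using dvd_sub h₂ h₁)
    omega
  unfold eps
  split_ifs <;> simp_all

theorem eps_odd {r : ℕ} {k : ℤ} (hk : 0 < k) (hkr : k < r) : Function.Odd (eps r k) := fun j => by
  rw [eps_eq_sub hk hkr, eps_eq_sub hk hkr, show -j - k = -(j + k) by ring,
    show -j + k = -(j - k) by ring]
  simp only [dvd_neg]
  ring

theorem eps_of_mem_Icc {r : ℕ} {k j : ℤ} (hk : 0 < k) (hkr : k < r) (hj : 0 ≤ j) (hjr : j ≤ r) :
    eps r k j = if j = k then 1 else 0 := by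
  have h₁ : 2 * (r : ℤ) ∣ j - k ↔ j = k := by
    refine ⟨fun h => ?_, fun h => by simp [h]⟩
    have := Int.eq_zero_of_abs_lt_dvd h (by rw [abs_lt]; omega)
    omega
  have h₂ : ¬ 2 * (r : ℤ) ∣ j + k := fun h => by
    have := Int.eq_zero_of_abs_lt_dvd h (by rw [abs_lt]; omega)
    omega
  simp [eps_eq_sub hk hkr, h₁, h₂]

def IsOddPeriodic (r : ℕ) (F : ℤ → ℂ) : Prop :=
  Periodic F (2 * r) ∧ Function.Odd F

namespace IsOddPeriodic

variable {r : ℕ} {F G : ℤ → ℂ}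

theorem apply_eq_ite (hF : IsOddPeriodic r F) (j : ℤ) :
    F j = if j % (2 * r) ≤ r then F (j % (2 * r)) else -F (2 * r - j % (2 * r)) := by
  rw [hF.1.eq_of_modEq (Int.mod_modEq j _).symm]
  split_ifs
  · rfl
  · rw [← hF.2, neg_sub, hF.1.sub_eq]

theorem eq_of_eqOn_Icc (hr : r ≠ 0) (hF : IsOddPeriodic r F) (hG : IsOddPeriodic r G)
    (h : Set.EqOn F G (Set.Icc 0 r)) : F = G := by
  have hr' : (0 : ℤ) < 2 * r := by omega
  have h₀ : ∀ j : ℤ, 0 ≤ j % (2 * r) := fun j => Int.emod_nonneg j hr'.ne'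
  have h₁ : ∀ j : ℤ, j % (2 * r) < 2 * r := fun j => Int.emod_lt_of_pos j hr'
  funext j
  rw [hF.apply_eq_ite, hG.apply_eq_ite]
  split_ifs
  · exact h ⟨h₀ j, ‹_›⟩
  · rw [h ⟨by linarith [h₁ j], by omega⟩]

theorem apply_zero (hF : IsOddPeriodic r F) : F 0 = 0 := hF.2.map_zero

theorem apply_self (hF : IsOddPeriodic r F) : F r = 0 := by
  have h : F r = F (-r) := by simpa [two_mul] using hF.1 (-r)
  rw [hF.2] at h
  exact self_eq_neg.mp h

theorem sum_mul_eps (hr : r ≠ 0) (hF : IsOddPeriodic r F) (j : ℤ) :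
    ∑ l : Fin (r - 1), F (l + 1) * eps r (l + 1) j = F j := by
  have hl : ∀ l : Fin (r - 1), 0 < (l : ℤ) + 1 ∧ (l : ℤ) + 1 < r := fun l => by omega
  have hG : IsOddPeriodic r fun j => ∑ l : Fin (r - 1), F (l + 1) * eps r (l + 1) j :=
    ⟨fun j => by simp only [eps_periodic _ _ j],
     fun j => by simp [eps_odd (hl _).1 (hl _).2 j]⟩
  refine congrFun (hG.eq_of_eqOn_Icc hr hF fun j ⟨hj, hjr⟩ => ?_) j
  simp only [eps_of_mem_Icc (hl _).1 (hl _).2 hj hjr, Int.cast_ite, Int.cast_one, Int.cast_zero,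
    mul_ite, mul_one, mul_zero]
  by_cases hj' : 1 ≤ j ∧ j < r
  · let l₀ : Fin (r - 1) := ⟨(j - 1).toNat, by omega⟩
    have hl₀ : ((l₀ : ℕ) : ℤ) + 1 = j := by simp only [l₀]; omega
    rw [Fintype.sum_eq_single l₀ fun l hl => if_neg fun h => hl (Fin.ext (by omega)),
      if_pos hl₀.symm, hl₀]
  · rw [Fintype.sum_eq_zero _ fun l => if_neg (by omega)]
    obtain rfl | rfl : j = 0 ∨ j = r := by omega
    exacts [hF.apply_zero.symm, hF.apply_self.symm]

end IsOddPeriodic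

theorem Polynomial.Chebyshev.aeval_S_add_inv {R A : Type*} [CommRing R] [Ring A] [Algebra R A]
    (u : Aˣ) (n : ℕ) :
    aeval (u + u⁻¹ : A) (S R n) = ∑ j ∈ range (n + 1), ((u ^ ((n : ℤ) - 2 * j) : Aˣ) : A) := by
  induction n using Nat.twoStepInduction with
  | zero => simp
  | one => simp [sum_range_succ]
  | more n ih₀ ih₁ =>
    have hmul : ∀ k : ℤ, (u : A) * ↑(u ^ k) = ↑(u ^ (k + 1)) := fun k => by
      rw [← Units.val_mul, ← _root_.zpow_one_add, add_comm]
    have hmul_inv : ∀ k : ℤ, (↑u⁻¹ : A) * ↑(u ^ k) = ↑(u ^ (k - 1)) := fun k => by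
      rw [← Units.val_mul, ← _root_.zpow_neg_one, ← _root_.zpow_add, neg_add_eq_sub]
    have hS : S R ((n + 2 : ℕ) : ℤ) = X * S R ((n + 1 : ℕ) : ℤ) - S R n := by
      push_cast; exact S_add_two R n
    rw [hS, map_sub, map_mul, aeval_X, ih₀, ih₁, add_mul, mul_sum, mul_sum]
    have e₁ : ∀ j : ℕ, ((n + 1 : ℕ) : ℤ) - 2 * j + 1 = ((n + 2 : ℕ) : ℤ) - 2 * j := fun j => by
      push_cast; ring
    have e₂ : ∀ j : ℕ, ((n + 1 : ℕ) : ℤ) - 2 * j - 1 = n - 2 * j := fun j => by push_cast; ring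
    have e₃ : (n : ℤ) - 2 * (n + 1 : ℕ) = ((n + 2 : ℕ) : ℤ) - 2 * (n + 2 : ℕ) := by
      push_cast; ring
    simp only [hmul, hmul_inv, e₁, e₂]
    rw [sum_range_succ (fun j : ℕ => ((u ^ ((n : ℤ) - 2 * j) : Aˣ) : A)) (n + 1),
      sum_range_succ (fun j : ℕ => ((u ^ (((n + 2 : ℕ) : ℤ) - 2 * j) : Aˣ) : A)) (n + 2), e₃]
    abel

theorem chebS_eq_S (n : ℕ) : chebS n = Chebyshev.S ℂ n := by
  induction n using Nat.twoStepInduction with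
  | zero => simp [chebS]
  | one => simp [chebS]
  | more n ih₀ ih₁ =>
    rw [chebS, ih₀, ih₁]
    push_cast
    exact (Chebyshev.S_add_two ℂ n).symm

noncomputable def weylOp (r : ℕ) (p q a : ℤ) : Module.End ℂ (ℤ → ℂ) where
  toFun F m := tconst r ^ (2 * a * q * m - a ^ 2 * p * q) * F (m - a * p)
  map_add' F G := by ext m; simp [mul_add]
  map_smul' c F := by ext m; simp; ring

section weylOp

variable {r : ℕ} {p q : ℤ}

@[simp]
theorem weylOp_apply (a : ℤ) (F : ℤ → ℂ) (m : ℤ) :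
    weylOp r p q a F m = tconst r ^ (2 * a * q * m - a ^ 2 * p * q) * F (m - a * p) :=
  rfl

theorem weylOp_mul (a b : ℤ) : weylOp r p q a * weylOp r p q b = weylOp r p q (a + b) := by
  ext F m
  simp only [Module.End.mul_apply, weylOp_apply, ← mul_assoc, ← zpow_add₀ (tconst_ne_zero r)]
  congr 2 <;> ring

theorem weylOp_zero : weylOp r p q 0 = 1 := by
  ext
  simp

variable (r p q) in
noncomputable def weylUnit : (Module.End ℂ (ℤ → ℂ))ˣ where
  val := weylOp r p q 1
  inv := weylOp r p q (-1)
  val_inv := by rw [weylOp_mul, add_neg_cancel, weylOp_zero]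
  inv_val := by rw [weylOp_mul, neg_add_cancel, weylOp_zero]

theorem val_weylUnit_zpow (a : ℤ) :
    ((weylUnit r p q ^ a : (Module.End ℂ (ℤ → ℂ))ˣ) : Module.End ℂ (ℤ → ℂ)) = weylOp r p q a := by
  induction a using Int.induction_on with
  | zero => simp [weylOp_zero]
  | succ n ih => rw [_root_.zpow_add_one, Units.val_mul, ih]; exact weylOp_mul _ _
  | pred n ih =>
    rw [_root_.zpow_sub_one, Units.val_mul, ih]
    exact (weylOp_mul _ _).trans (by rw [sub_eq_add_neg])

theorem weylOp_periodic (hr : r ≠ 0) {F : ℤ → ℂ} (hF : Periodic F (2 * r)) (a : ℤ) :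
    Periodic (weylOp r p q a F) (2 * r) := fun m => by
  rw [weylOp_apply, weylOp_apply, add_sub_right_comm, hF]
  congr 1
  exact tconst_zpow_eq_zpow hr ⟨a * q, by ring⟩

theorem weylOp_apply_neg {F : ℤ → ℂ} (hF : Function.Odd F) (a m : ℤ) :
    weylOp r p q a F (-m) = -weylOp r p q (-a) F m := by
  simp only [weylOp_apply, show -m - a * p = -(m - -a * p) by ring, hF _]
  ring_nf

theorem IsOddPeriodic.weylOp_add_neg (hr : r ≠ 0) {F : ℤ → ℂ} (hF : IsOddPeriodic r F) (a : ℤ) :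
    IsOddPeriodic r ((weylOp r p q a + weylOp r p q (-a)) F) :=
  ⟨(weylOp_periodic hr hF.1 a).add (weylOp_periodic hr hF.1 (-a)), fun m => by
    simp only [LinearMap.add_apply, Pi.add_apply, weylOp_apply_neg hF.2, neg_neg]
    abel⟩

end weylOp

theorem isOddPeriodic_eps {r : ℕ} {k : ℤ} (hk : 0 < k) (hkr : k < r) :
    IsOddPeriodic r fun j => (eps r k j : ℂ) :=
  ⟨fun j => by simp only [eps_periodic r k j], fun j => by simp [eps_odd hk hkr j]⟩

def coords (r : ℕ) : (ℤ → ℂ) →ₗ[ℂ] Fin (r - 1) → ℂ :=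
  LinearMap.funLeft ℂ ℂ fun m => (m : ℤ) + 1

namespace IsOddPeriodic

variable {r : ℕ} {p q : ℤ} {F : ℤ → ℂ}

theorem coords_vecMul_Cmat (hr : r ≠ 0) (hF : IsOddPeriodic r F) :
    coords r F ᵥ* Cmat r p q = coords r ((weylOp r p q 1 + weylOp r p q (-1)) F) := by
  ext m
  have h₁ := hF.sum_mul_eps hr (m + 1 - p)
  have h₂ := hF.sum_mul_eps hr (m + 1 + p)
  simp only [coords, LinearMap.funLeft_apply, vecMul, dotProduct, Cmat, of_apply,
    LinearMap.add_apply, Pi.add_apply, weylOp_apply]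
  have ht := tconst_ne_zero r
  rw [show 2 * 1 * q * ((m : ℤ) + 1) - 1 ^ 2 * p * q = -(p * q) + 2 * q * ((m : ℤ) + 1) by ring,
    show 2 * -1 * q * ((m : ℤ) + 1) - (-1) ^ 2 * p * q = -(p * q) + -(2 * q * ((m : ℤ) + 1)) by
      ring, zpow_add₀ ht, zpow_add₀ ht, one_mul, neg_one_mul, sub_neg_eq_add, ← h₁, ← h₂,
    mul_sum, mul_sum, ← sum_add_distrib]
  exact sum_congr rfl fun l _ => by ring

theorem coords_vecMul_Cmat_pow (hr : r ≠ 0) (hF : IsOddPeriodic r F) (n : ℕ) :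
    coords r F ᵥ* Cmat r p q ^ n = coords r (((weylOp r p q 1 + weylOp r p q (-1)) ^ n) F) := by
  induction n generalizing F with
  | zero => simp
  | succ n ih =>
    rw [pow_succ', ← vecMul_vecMul, hF.coords_vecMul_Cmat hr, ih (hF.weylOp_add_neg hr 1),
      pow_succ]
    rfl

theorem coords_vecMul_aeval_Cmat (hr : r ≠ 0) (hF : IsOddPeriodic r F) (P : ℂ[X]) :
    coords r F ᵥ* aeval (Cmat r p q) P =
      coords r (aeval (weylOp r p q 1 + weylOp r p q (-1)) P F) := by
  induction P using Polynomial.induction_on' with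
  | add P Q hP hQ => simp only [map_add, vecMul_add, hP, hQ, LinearMap.add_apply]
  | monomial n a =>
    simp only [aeval_monomial, ← Algebra.smul_def, vecMul_smul, LinearMap.smul_apply, map_smul,
      hF.coords_vecMul_Cmat_pow hr]

end IsOddPeriodic

theorem coords_eps {r : ℕ} (k : Fin (r - 1)) :
    coords r (fun j => (eps r (k + 1) j : ℂ)) = Pi.single k 1 := by
  ext m
  have := m.isLt
  rw [coords, LinearMap.funLeft_apply, eps_of_mem_Icc (by omega) (by omega) (by omega) (by omega),
    Pi.single_apply]
  simp [Fin.ext_iff]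

theorem aeval_Cmat_apply {r : ℕ} (p q : ℤ) (P : ℂ[X]) (k m : Fin (r - 1)) :
    aeval (Cmat r p q) P k m =
      aeval (weylOp r p q 1 + weylOp r p q (-1)) P (fun j => (eps r (k + 1) j : ℂ)) (m + 1) := by
  have hr : r ≠ 0 := by have := k.isLt; omega
  rw [← row_apply (aeval (Cmat r p q) P) k m, ← single_one_vecMul, ← coords_eps,
    (isOddPeriodic_eps (by omega) (by omega)).coords_vecMul_aeval_Cmat hr]
  rfl

noncomputable def gaussTerm (r : ℕ) (p q c k j : ℤ) : ℂ :=
  if 2 * (r : ℤ) ∣ c + 2 * j * p - k then tconst r ^ (-(4 * j * q * (c + j * p))) else 0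

section gaussTerm

variable {r : ℕ} {p q c k : ℤ}

theorem gaussTerm_periodic (hr : r ≠ 0) : Periodic (gaussTerm r p q c k) r := fun j => by
  have e : c + 2 * (j + r) * p - k = c + 2 * j * p - k + 2 * r * p := by ring
  simp only [gaussTerm, e, dvd_add_left (dvd_mul_right _ p)]
  split_ifs
  · exact tconst_zpow_eq_zpow hr ⟨-(q * (c + 2 * j * p + r * p)), by ring⟩
  · rfl

theorem gaussTerm_add (hr : r ≠ 0) {s : ℤ} (hs : (r : ℤ) ∣ s * p) (j : ℤ) :
    gaussTerm r p q c k (j + s) = tconst r ^ (-(4 * q * s * k)) * gaussTerm r p q c k j := by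
  obtain ⟨w, hw⟩ := hs
  have e : c + 2 * (j + s) * p - k = c + 2 * j * p - k + 2 * r * w := by linear_combination 2 * hw
  simp only [gaussTerm, e, dvd_add_left (dvd_mul_right _ w)]
  split_ifs with h
  · obtain ⟨v, hv⟩ := h
    rw [← zpow_add₀ (tconst_ne_zero r)]
    exact tconst_zpow_eq_zpow hr
      ⟨-(q * s * (2 * v + w)), by linear_combination (-4 * q * s) * (hv + hw)⟩
  · rw [mul_zero]

theorem gaussTerm_sub (hr : r ≠ 0) {s : ℤ} (hs : (r : ℤ) ∣ s * p + c) (j : ℤ) :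
    gaussTerm r p q c k (s - j) = gaussTerm r p q c (-k) j := by
  obtain ⟨w, hw⟩ := hs
  have e : c + 2 * (s - j) * p - k = -(c + 2 * j * p - -k) + 2 * r * w := by
    linear_combination 2 * hw
  simp only [gaussTerm, e, dvd_add_left (dvd_mul_right _ w), dvd_neg]
  split_ifs
  · exact tconst_zpow_eq_zpow hr
      ⟨-(q * w * (s - 2 * j)), by linear_combination (-4 * q * (s - 2 * j)) * hw⟩
  · rfl

theorem gaussTerm_eq_zero {d : ℤ} (hdp : d ∣ p) (hdr : d ∣ r) (hd : ¬ d ∣ c - k) (j : ℤ) :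
    gaussTerm r p q c k j = 0 :=
  if_neg fun h => hd <| by
    have h₁ : d ∣ c + 2 * j * p - k := (hdr.mul_left 2).trans h
    have h₂ : d ∣ 2 * j * p := hdp.mul_left _
    rw [show c - k = c + 2 * j * p - k - 2 * j * p by ring]
    exact h₁.sub h₂

theorem sum_gaussTerm_eq_zero (hr : r ≠ 0) (hpq : IsCoprime p q)
    (hk : ¬ (Int.gcd p r : ℤ) ∣ k) : ∑ j ∈ range r, gaussTerm r p q c k j = 0 := by
  set d : ℤ := (Int.gcd p r : ℤ)
  obtain ⟨p₁, hp₁⟩ : d ∣ p := Int.gcd_dvd_left p r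
  obtain ⟨s, hs⟩ : d ∣ r := Int.gcd_dvd_right p r
  have hdq : IsCoprime d q := IsCoprime.of_isCoprime_of_dvd_left hpq ⟨p₁, hp₁⟩
  have hs₀ : s ≠ 0 := by rintro rfl; omega
  refine (gaussTerm_periodic hr).sum_range_eq_zero_of_add_eq_mul (s := s) ?_
    (gaussTerm_add hr ⟨p₁, by rw [hp₁, hs]; ring⟩)
  rw [Ne, tconst_zpow_eq_one_iff hr]
  rintro ⟨v, hv⟩
  refine hk (hdq.dvd_of_dvd_mul_left ⟨-v, mul_right_cancel₀ hs₀ ?_⟩)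
  have h : q * s * k = -(r * v) := by linarith
  linear_combination h - v * hs

theorem sum_gaussTerm_neg_of_dvd (hr : r ≠ 0) (hc : (Int.gcd p r : ℤ) ∣ c) :
    ∑ j ∈ range r, gaussTerm r p q c (-k) j = ∑ j ∈ range r, gaussTerm r p q c k j := by
  obtain ⟨c₁, hc₁⟩ := hc
  have hs : (r : ℤ) ∣ -(c₁ * Int.gcdA p r) * p + c :=
    ⟨c₁ * Int.gcdB p r, by rw [hc₁, Int.gcd_eq_gcd_ab]; ring⟩
  rw [← (gaussTerm_periodic (q := q) (k := k) hr).sum_range_sub (-(c₁ * Int.gcdA p r))]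
  exact sum_congr rfl fun j _ => (gaussTerm_sub hr hs j).symm

theorem sum_gaussTerm_neg (hr : r ≠ 0) (hpq : IsCoprime p q) :
    ∑ j ∈ range r, gaussTerm r p q c (-k) j = ∑ j ∈ range r, gaussTerm r p q c k j := by
  set d : ℤ := (Int.gcd p r : ℤ)
  by_cases hc : d ∣ c
  · exact sum_gaussTerm_neg_of_dvd hr hc
  by_cases hk : d ∣ k
  · have hdp : d ∣ p := Int.gcd_dvd_left p r
    have hdr : d ∣ r := Int.gcd_dvd_right p r
    have hzero : ∀ k', ¬ d ∣ c - k' → ∑ j ∈ range r, gaussTerm r p q c k' j = 0 := fun k' h =>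
      sum_eq_zero fun j _ => gaussTerm_eq_zero hdp hdr h j
    rw [hzero _ fun h => hc (by simpa using h.sub hk),
      hzero _ fun h => hc (by simpa using h.add hk)]
  · rw [sum_gaussTerm_eq_zero hr hpq (by rwa [dvd_neg]), sum_gaussTerm_eq_zero hr hpq hk]

end gaussTerm

theorem sum_weylOp_apply_eps {r : ℕ} {p q k : ℤ} (hpq : IsCoprime p q) (hk : 0 < k) (hkr : k < r)
    (m : ℤ) : (∑ j ∈ range r, weylOp r p q (r - 1 - 2 * j)) (fun j => (eps r k j : ℂ)) m = 0 := by
  have hr : r ≠ 0 := by omega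
  set c := m - (r - 1) * p
  have hterm : ∀ j : ℕ, weylOp r p q (r - 1 - 2 * j) (fun j => (eps r k j : ℂ)) m =
      tconst r ^ (2 * (r - 1) * q * m - (r - 1) ^ 2 * p * q) *
        (gaussTerm r p q c k j - gaussTerm r p q c (-k) j) := fun j => by
    rw [weylOp_apply, eps_eq_sub hk hkr, show m - (r - 1 - 2 * j) * p = c + 2 * j * p by ring]
    have e : 2 * ((r : ℤ) - 1 - 2 * j) * q * m - ((r : ℤ) - 1 - 2 * j) ^ 2 * p * q =
        2 * (r - 1) * q * m - (r - 1) ^ 2 * p * q + -(4 * j * q * (c + j * p)) := by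
      simp only [c]; ring
    rw [e, zpow_add₀ (tconst_ne_zero r)]
    simp only [gaussTerm, sub_neg_eq_add]
    push_cast
    split_ifs <;> ring
  simp only [LinearMap.sum_apply, Finset.sum_apply, hterm, ← mul_sum, sum_sub_distrib,
    sum_gaussTerm_neg hr hpq, sub_self, mul_zero]

theorem chebS_Cmat_eq_zero_general (r : ℕ) (p q : ℤ) (hpq : IsCoprime p q) :
    Polynomial.aeval (Cmat r p q) (chebS (r - 1)) = 0 := by
  ext k m
  have hr : 1 ≤ r := by have := k.isLt; omega
  have hA : weylOp r p q 1 + weylOp r p q (-1) = ↑(weylUnit r p q) + ↑(weylUnit r p q)⁻¹ := rfl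
  rw [aeval_Cmat_apply, hA, chebS_eq_S, Chebyshev.aeval_S_add_inv, Nat.sub_add_cancel hr]
  simp only [val_weylUnit_zpow, Nat.cast_sub hr, Nat.cast_one]
  exact sum_weylOp_apply_eps hpq (by omega) (by omega) _

/-- For coprime `p, q`, the Chebyshev polynomial of the second kind of degree `r−1`
vanishes on `C(p,q)`: the curve of slope `p/q` colored by the `r`-dimensional irreducible
representation is the zero operator. -/
theorem chebS_Cmat_eq_zero (r : ℕ) (hr : 2 ≤ r) (p q : ℤ) (hpq : IsCoprime p q) :
    Polynomial.aeval (Cmat r p q) (chebS (r - 1)) = 0 :=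
  chebS_Cmat_eq_zero_general r p q hpq
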